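/- Let (Ω, F, P) be a probability space, S ⊆ ℝⁿ a bounded domain, and O ⊆ Ω a measurable set with P(O) < 1. If f₀ ∈ L²(S) (viewed as an element of L²(S × Ω) constant in ω) and f₁ ∈ L²(S × Ω) vanishes a.e. on S × (Ω \ O), then ‖f₀‖_{L²(S)} + ‖f₁‖_{L²(S×Ω)} ≤ C ‖f₀ + f₁‖_{L²(S×Ω)} with a constant C depending only on P(O); more precisely, ‖f₁‖²_{L²(S×Ω)} ≤ (1 − P(O))⁻¹ ‖f₀+f₁‖²_{L²(S×Ω)} and ‖f₀‖²_{L²(S)} ≤ 2(2 − P(O))(1 − P(O))⁻¹ ‖f₀+f₁‖²_{L²(S×Ω)}. -/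

import Mathlib

/-!
Fibrewise in `x`, the sum `f₀ x + f₁ (x, ·)` equals the constant `f₀ x` on `Oᶜ`, a set of
probability `1 - P O > 0`; so `(1 - P O) ‖f₀‖² ≤ ‖f₀ + f₁‖²`. On `O`, `f₁ = (f₀ + f₁) - f₀`,
and the weighted inequality `(a + b)² ≤ a² / s + b² / t` for `s + t = 1`, with `s = 1 - P O`
and `t = P O`, bounds `∫_O ‖f₁‖²` by `(1 - P O)⁻¹ ∫_O ‖f₀ + f₁‖² + ‖f₀‖²`, and the last term is
again paid for by the part of `‖f₀ + f₁‖²` living over `Oᶜ`.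
-/

open MeasureTheory
open scoped ENNReal

theorem ENNReal.add_sq_le_inv_mul_add_inv_mul (a b : ℝ≥0∞) {s t : ℝ≥0∞} (hst : s + t = 1) :
    (a + b) ^ 2 ≤ s⁻¹ * a ^ 2 + t⁻¹ * b ^ 2 := by
  rcases eq_or_ne s 0 with rfl | hs
  · rcases eq_or_ne a 0 with rfl | ha
    · simp_all
    · simp [ha]
  rcases eq_or_ne t 0 with rfl | ht
  · rcases eq_or_ne b 0 with rfl | hb
    · simp_all
    · simp [hb]
  have hs_top : s ≠ ∞ := ne_top_of_le_ne_top one_ne_top (hst ▸ le_self_add)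
  have ht_top : t ≠ ∞ := ne_top_of_le_ne_top one_ne_top (hst ▸ le_add_self)
  have hweight {w : ℝ≥0∞} (c : ℝ≥0∞) (h₀ : w ≠ 0) (h_top : w ≠ ∞) :
      w * (w⁻¹ * c) ^ 2 = w⁻¹ * c ^ 2 := by
    rw [mul_pow, ← mul_assoc, sq w⁻¹, ← mul_assoc, ENNReal.mul_inv_cancel h₀ h_top, one_mul]
  have h := ENNReal.rpow_arith_mean_le_arith_mean2_rpow s t (s⁻¹ * a) (t⁻¹ * b) hst one_le_two
  simpa only [ENNReal.rpow_two, ENNReal.mul_inv_cancel_left hs hs_top,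
    ENNReal.mul_inv_cancel_left ht ht_top, hweight a hs hs_top, hweight b ht ht_top] using h

theorem ENNReal.le_mul_of_sq_le_mul_sq {x y c : ℝ≥0∞} (hc : 1 ≤ c) (h : x ^ 2 ≤ c * y ^ 2) :
    x ≤ c * y := by
  rw [← ENNReal.pow_le_pow_left_iff two_ne_zero, mul_pow]
  calc x ^ 2 ≤ c * y ^ 2 := h
    _ ≤ c ^ 2 * y ^ 2 := by gcongr; exact le_self_pow₀ hc two_ne_zero

namespace MeasureTheory

theorem eLpNorm_two_sq {α E : Type*} [MeasurableSpace α] [ENorm E] (f : α → E) (μ : Measure α) :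
    eLpNorm f 2 μ ^ 2 = ∫⁻ a, ‖f a‖ₑ ^ 2 ∂μ := by
  simpa using eLpNorm_nnreal_pow_eq_lintegral (f := f) (μ := μ) (p := 2) two_ne_zero

variable {X Ω E : Type*} [MeasurableSpace X] [MeasurableSpace Ω] [NormedAddCommGroup E]
  {μ : Measure X} [SFinite μ] {P : Measure Ω}

theorem setLIntegral_preimage_snd_comp_fst [SFinite P] {f : X → ℝ≥0∞} (hf : AEMeasurable f μ)
    (s : Set Ω) : ∫⁻ p in Prod.snd ⁻¹' s, f p.1 ∂μ.prod P = P s * ∫⁻ x, f x ∂μ := by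
  have hrestrict : (μ.prod P).restrict (Prod.snd ⁻¹' s) = μ.prod (P.restrict s) := by
    rw [← Set.univ_prod, ← Measure.prod_restrict, Measure.restrict_univ]
  have hmap : (μ.prod (P.restrict s)).map Prod.fst = P s • μ := by
    rw [Measure.map_fst_prod, Measure.restrict_apply_univ]
  rw [hrestrict, ← lintegral_map' (hmap ▸ hf.smul_measure _) measurable_fst.aemeasurable, hmap,
    lintegral_smul_measure, smul_eq_mul]

variable [IsProbabilityMeasure P] {O : Set Ω} {f₀ : X → E} {f₁ : X × Ω → E}

theorem lintegral_enorm_sq_le_inv_mul_setLIntegral_compl (hO : MeasurableSet O) (hOlt : P O < 1)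
    (hf₀ : AEStronglyMeasurable f₀ μ)
    (hvanish : ∀ᵐ p ∂μ.prod P, p.2 ∉ O → f₁ p = 0) :
    ∫⁻ x, ‖f₀ x‖ₑ ^ 2 ∂μ
      ≤ (1 - P O)⁻¹ * ∫⁻ p in (Prod.snd ⁻¹' O)ᶜ, ‖f₀ p.1 + f₁ p‖ₑ ^ 2 ∂μ.prod P := by
  have hcompl : ∫⁻ p in (Prod.snd ⁻¹' O)ᶜ, ‖f₀ p.1 + f₁ p‖ₑ ^ 2 ∂μ.prod P
      = (1 - P O) * ∫⁻ x, ‖f₀ x‖ₑ ^ 2 ∂μ := by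
    rw [← prob_compl_eq_one_sub hO, ← setLIntegral_preimage_snd_comp_fst (hf₀.enorm.pow_const 2)]
    refine setLIntegral_congr_fun_ae (measurable_snd hO.compl) (hvanish.mono fun p hp hpO => ?_)
    rw [hp hpO, add_zero]
  rw [hcompl, ENNReal.inv_mul_cancel_left (tsub_pos_of_lt hOlt).ne'
    (ne_top_of_le_ne_top ENNReal.one_ne_top tsub_le_self)]

theorem eLpNorm_comp_fst_summand_sq_le (hO : MeasurableSet O) (hOlt : P O < 1)
    (hf₀ : AEStronglyMeasurable f₀ μ) (hvanish : ∀ᵐ p ∂μ.prod P, p.2 ∉ O → f₁ p = 0) :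
    eLpNorm f₀ 2 μ ^ 2 ≤ (1 - P O)⁻¹ * eLpNorm (fun p => f₀ p.1 + f₁ p) 2 (μ.prod P) ^ 2 := by
  rw [eLpNorm_two_sq, eLpNorm_two_sq]
  refine (lintegral_enorm_sq_le_inv_mul_setLIntegral_compl hO hOlt hf₀ hvanish).trans ?_
  exact mul_le_mul_right (setLIntegral_le_lintegral _ _) _

theorem eLpNorm_vanishing_summand_sq_le (hO : MeasurableSet O) (hOlt : P O < 1)
    (hf₀ : AEStronglyMeasurable f₀ μ) (hvanish : ∀ᵐ p ∂μ.prod P, p.2 ∉ O → f₁ p = 0) :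
    eLpNorm f₁ 2 (μ.prod P) ^ 2
      ≤ (1 - P O)⁻¹ * eLpNorm (fun p => f₀ p.1 + f₁ p) 2 (μ.prod P) ^ 2 := by
  set T : Set (X × Ω) := Prod.snd ⁻¹' O
  have hT : MeasurableSet T := measurable_snd hO
  have hf₁T : ∫⁻ p, ‖f₁ p‖ₑ ^ 2 ∂μ.prod P = ∫⁻ p in T, ‖f₁ p‖ₑ ^ 2 ∂μ.prod P := by
    have hzero : ∫⁻ p in Tᶜ, ‖f₁ p‖ₑ ^ 2 ∂μ.prod P = 0 := by
      rw [setLIntegral_congr_fun_ae hT.compl (g := fun _ => 0) (hvanish.mono fun p hp hpO => ?_),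
        lintegral_zero]
      simp [hp hpO]
    rw [← lintegral_add_compl _ hT, hzero, add_zero]
  have hpointwise (p : X × Ω) : ‖f₁ p‖ₑ ^ 2
      ≤ (1 - P O)⁻¹ * ‖f₀ p.1 + f₁ p‖ₑ ^ 2 + (P O)⁻¹ * ‖f₀ p.1‖ₑ ^ 2 :=
    calc ‖f₁ p‖ₑ ^ 2 = ‖(f₀ p.1 + f₁ p) - f₀ p.1‖ₑ ^ 2 := by rw [add_sub_cancel_left]
      _ ≤ (‖f₀ p.1 + f₁ p‖ₑ + ‖f₀ p.1‖ₑ) ^ 2 := by gcongr; exact enorm_sub_le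
      _ ≤ _ := ENNReal.add_sq_le_inv_mul_add_inv_mul _ _ (tsub_add_cancel_of_le hOlt.le)
  have hf₀m : AEMeasurable (fun x => ‖f₀ x‖ₑ ^ 2) μ := hf₀.enorm.pow_const 2
  rw [eLpNorm_two_sq, eLpNorm_two_sq, hf₁T]
  calc ∫⁻ p in T, ‖f₁ p‖ₑ ^ 2 ∂μ.prod P
      ≤ ∫⁻ p in T, ((1 - P O)⁻¹ * ‖f₀ p.1 + f₁ p‖ₑ ^ 2 + (P O)⁻¹ * ‖f₀ p.1‖ₑ ^ 2) ∂μ.prod P :=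
        lintegral_mono hpointwise
    _ = (1 - P O)⁻¹ * ∫⁻ p in T, ‖f₀ p.1 + f₁ p‖ₑ ^ 2 ∂μ.prod P
          + (P O)⁻¹ * (P O * ∫⁻ x, ‖f₀ x‖ₑ ^ 2 ∂μ) := by
        rw [lintegral_add_right' _ ((hf₀m.comp_fst.restrict).const_mul _),
          lintegral_const_mul' _ _ (ENNReal.inv_ne_top.2 (tsub_pos_of_lt hOlt).ne'),
          lintegral_const_mul'' _ hf₀m.comp_fst.restrict, setLIntegral_preimage_snd_comp_fst hf₀m]
    _ ≤ (1 - P O)⁻¹ * ∫⁻ p in T, ‖f₀ p.1 + f₁ p‖ₑ ^ 2 ∂μ.prod P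
          + (1 - P O)⁻¹ * ∫⁻ p in Tᶜ, ‖f₀ p.1 + f₁ p‖ₑ ^ 2 ∂μ.prod P := by
        refine add_le_add_right ?_ _
        -- `(P O)⁻¹ * P O ≤ 1` holds also when `P O = 0`, since `∞ * 0 = 0` in `ℝ≥0∞`
        rw [← mul_assoc]
        exact (mul_le_of_le_one_left' (ENNReal.inv_mul_le_one _)).trans
          (lintegral_enorm_sq_le_inv_mul_setLIntegral_compl hO hOlt hf₀ hvanish)
    _ = (1 - P O)⁻¹ * ∫⁻ p, ‖f₀ p.1 + f₁ p‖ₑ ^ 2 ∂μ.prod P := by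
        rw [← mul_add, lintegral_add_compl _ hT]

end MeasureTheory

theorem stmt0_general {n : ℕ} (S : Set (EuclideanSpace ℝ (Fin n)))
    {Ω : Type*} [MeasurableSpace Ω] (P : Measure Ω) [IsProbabilityMeasure P]
    (O : Set Ω) (hO : MeasurableSet O) (hOlt : P O < 1)
    (f₀ : EuclideanSpace ℝ (Fin n) → ℝ) (f₁ : EuclideanSpace ℝ (Fin n) × Ω → ℝ)
    (hf₀ : MemLp f₀ 2 (volume.restrict S))
    (hvanish : ∀ᵐ p ∂((volume.restrict S).prod P), p.2 ∉ O → f₁ p = 0) :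
    eLpNorm f₁ 2 ((volume.restrict S).prod P) ^ 2
        ≤ (1 - P O)⁻¹ *
          eLpNorm (fun p => f₀ p.1 + f₁ p) 2 ((volume.restrict S).prod P) ^ 2 ∧
    eLpNorm f₀ 2 (volume.restrict S) ^ 2
        ≤ (2 * (2 - P O)) * (1 - P O)⁻¹ *
          eLpNorm (fun p => f₀ p.1 + f₁ p) 2 ((volume.restrict S).prod P) ^ 2 ∧
    ∃ C : ℝ≥0∞, C < ⊤ ∧
      eLpNorm f₀ 2 (volume.restrict S) + eLpNorm f₁ 2 ((volume.restrict S).prod P)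
        ≤ C * eLpNorm (fun p => f₀ p.1 + f₁ p) 2 ((volume.restrict S).prod P) := by
  have h₁ := eLpNorm_vanishing_summand_sq_le hO hOlt hf₀.aestronglyMeasurable hvanish
  have h₀ := eLpNorm_comp_fst_summand_sq_le hO hOlt hf₀.aestronglyMeasurable hvanish
  have hc : 1 ≤ (1 - P O)⁻¹ := ENNReal.one_le_inv.2 tsub_le_self
  have htwo : (1 : ℝ≥0∞) ≤ 2 * (2 - P O) := by
    have hone : (1 : ℝ≥0∞) ≤ 2 - P O := ENNReal.le_sub_of_add_le_right (measure_ne_top P O)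
      ((add_le_add_right prob_le_one 1).trans_eq one_add_one_eq_two)
    exact hone.trans (le_mul_of_one_le_left' one_le_two)
  refine ⟨h₁, ?_, 2 * (1 - P O)⁻¹, ?_, ?_⟩
  · rw [mul_assoc (2 * _)]
    exact h₀.trans (le_mul_of_one_le_left' htwo)
  · exact ENNReal.mul_lt_top ENNReal.ofNat_lt_top (ENNReal.inv_lt_top.2 (tsub_pos_of_lt hOlt))
  · rw [mul_assoc, two_mul]
    exact add_le_add (ENNReal.le_mul_of_sq_le_mul_sq hc h₀) (ENNReal.le_mul_of_sq_le_mul_sq hc h₁)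

/-- norm bounds for the two components of a sum `f₀ + f₁`,
where `f₀ ∈ L²(S)` (constant in `ω`) and `f₁ ∈ L²(S × Ω)` vanishes off `S × O`. -/
theorem stmt0 {n : ℕ} (S : Set (EuclideanSpace ℝ (Fin n)))
    (hSopen : IsOpen S) (hSbdd : Bornology.IsBounded S) (hSne : S.Nonempty)
    {Ω : Type*} [MeasurableSpace Ω] (P : Measure Ω) [IsProbabilityMeasure P]
    (O : Set Ω) (hO : MeasurableSet O) (hOlt : P O < 1)
    (f₀ : EuclideanSpace ℝ (Fin n) → ℝ) (f₁ : EuclideanSpace ℝ (Fin n) × Ω → ℝ)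
    (hf₀ : MemLp f₀ 2 (volume.restrict S))
    (hf₁ : MemLp f₁ 2 ((volume.restrict S).prod P))
    (hvanish : ∀ᵐ p ∂((volume.restrict S).prod P), p.2 ∉ O → f₁ p = 0) :
    eLpNorm f₁ 2 ((volume.restrict S).prod P) ^ 2
        ≤ (1 - P O)⁻¹ *
          eLpNorm (fun p => f₀ p.1 + f₁ p) 2 ((volume.restrict S).prod P) ^ 2 ∧
    eLpNorm f₀ 2 (volume.restrict S) ^ 2
        ≤ (2 * (2 - P O)) * (1 - P O)⁻¹ *
          eLpNorm (fun p => f₀ p.1 + f₁ p) 2 ((volume.restrict S).prod P) ^ 2 ∧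
    ∃ C : ℝ≥0∞, C < ⊤ ∧
      eLpNorm f₀ 2 (volume.restrict S) + eLpNorm f₁ 2 ((volume.restrict S).prod P)
        ≤ C * eLpNorm (fun p => f₀ p.1 + f₁ p) 2 ((volume.restrict S).prod P) :=
  stmt0_general S P O hO hOlt f₀ f₁ hf₀ hvanish
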